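/- As α → 0, the entropy of SN(μ, σ², α) converges to H_{N(μ,σ²)}. -/
import Mathlib


open MeasureTheory Real Filter

noncomputable def stdphi (x : ℝ) : ℝ := (Real.sqrt (2 * Real.pi))⁻¹ * Real.exp (-(x ^ 2) / 2)

noncomputable def stdPhi (x : ℝ) : ℝ := ∫ t in Set.Iic x, stdphi t

open Set

section aux

lemma stdphi_pos (x : ℝ) : 0 < stdphi x := by unfold stdphi; positivity

lemma stdphi_eq (x : ℝ) : stdphi x = (Real.sqrt (2 * Real.pi))⁻¹ * Real.exp (-(1/2) * x ^ 2) := by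
  unfold stdphi; ring_nf

lemma continuous_stdphi : Continuous stdphi := by
  unfold stdphi; continuity

lemma integrable_stdphi : Integrable stdphi := by
  have h := (integrable_exp_neg_mul_sq (by norm_num : (0:ℝ) < 1/2)).const_mul
    (Real.sqrt (2 * Real.pi))⁻¹
  convert h using 2 with x
  rw [stdphi_eq]

lemma integral_stdphi : ∫ x, stdphi x = 1 := by
  have h : ∫ x : ℝ, Real.exp (-(1/2) * x ^ 2) = Real.sqrt (π / (1/2)) := integral_gaussian (1/2)
  simp_rw [stdphi_eq, integral_const_mul, h]
  rw [show π / (1/2) = 2 * π by ring, inv_mul_cancel₀ (by positivity)]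

lemma integrable_sq_stdphi' : Integrable (fun x : ℝ => x ^ 2 * Real.exp (-(1/2) * x ^ 2)) := by
  have h := integrable_rpow_mul_exp_neg_mul_sq (by norm_num : (0:ℝ) < 1/2)
    (by norm_num : (-1:ℝ) < 2)
  convert h using 2 with x
  rw [show ((2:ℝ)) = ((2:ℕ):ℝ) by norm_num, Real.rpow_natCast]

lemma integrable_sq_stdphi : Integrable (fun x : ℝ => x ^ 2 * stdphi x) := by
  have h := integrable_sq_stdphi'.const_mul (Real.sqrt (2 * Real.pi))⁻¹
  convert h using 2 with x
  rw [stdphi_eq]; ring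

open Set in
lemma int_Ioi_sq : ∫ x in Set.Ioi (0:ℝ), x ^ 2 * Real.exp (-(1/2) * x ^ 2)
    = Real.sqrt (2 * π) / 2 := by
  have h := integral_rpow_mul_exp_neg_mul_rpow (p := 2) (q := 2) (b := 1/2)
    (by norm_num) (by norm_num) (by norm_num)
  rw [show ∫ x in Ioi (0:ℝ), x ^ 2 * Real.exp (-(1/2) * x ^ 2)
      = ∫ x in Ioi (0:ℝ), x ^ (2:ℝ) * Real.exp (-(1/2) * x ^ (2:ℝ)) by
    refine setIntegral_congr_fun measurableSet_Ioi fun x _ => ?_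
    rw [show ((2:ℝ)) = ((2:ℕ):ℝ) by norm_num, Real.rpow_natCast]]
  rw [h]
  have hG : Real.Gamma ((2+1)/2 : ℝ) = Real.sqrt π / 2 := by
    rw [show ((2+1)/2 : ℝ) = 1/2 + 1 by norm_num, Real.Gamma_add_one (by norm_num),
      Real.Gamma_one_half_eq]
    ring
  rw [hG, show (-(2+1)/2 : ℝ) = -(3/2) by norm_num, Real.rpow_neg (by norm_num)]
  have h1 : ((1:ℝ)/2) ^ ((3:ℝ)/2) = ((2:ℝ) ^ ((3:ℝ)/2))⁻¹ := by
    rw [show ((1:ℝ)/2) = 2⁻¹ by norm_num, Real.inv_rpow (by norm_num)]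
  rw [h1, inv_inv]
  have h2 : (2:ℝ) ^ ((3:ℝ)/2) = 2 * Real.sqrt 2 := by
    rw [show ((3:ℝ)/2) = 1 + 1/2 by norm_num, Real.rpow_add (by norm_num), Real.rpow_one,
      ← Real.sqrt_eq_rpow]
  rw [h2, Real.sqrt_mul (by norm_num)]
  ring

open Set in
lemma integral_sq_stdphi : ∫ x : ℝ, x ^ 2 * stdphi x = 1 := by
  have hline : ∫ x : ℝ, x ^ 2 * Real.exp (-(1/2) * x ^ 2) = Real.sqrt (2 * π) := by
    have hint := integrable_sq_stdphi'
    rw [← intervalIntegral.integral_Iic_add_Ioi (hint.integrableOn) (hint.integrableOn)]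
    have hIic : ∫ x in Iic (0:ℝ), x ^ 2 * Real.exp (-(1/2) * x ^ 2)
        = ∫ x in Ioi (0:ℝ), x ^ 2 * Real.exp (-(1/2) * x ^ 2) := by
      rw [show (0:ℝ) = -0 by norm_num, ← integral_comp_neg_Ioi]
      norm_num
    rw [hIic, int_Ioi_sq]
    ring
  have : ∫ x : ℝ, x ^ 2 * stdphi x
      = (Real.sqrt (2*π))⁻¹ * ∫ x : ℝ, x ^ 2 * Real.exp (-(1/2) * x ^ 2) := by
    rw [← integral_const_mul]
    congr 1; funext x; rw [stdphi_eq]; ring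
  rw [this, hline, inv_mul_cancel₀ (by positivity)]

open Set in
lemma stdPhi_pos (x : ℝ) : 0 < stdPhi x := by
  unfold stdPhi
  rw [setIntegral_pos_iff_support_of_nonneg_ae
    (ae_of_all _ fun t => (stdphi_pos t).le) integrable_stdphi.integrableOn]
  have hs : Function.support stdphi = Set.univ := by
    ext t; simp [Function.mem_support, (stdphi_pos t).ne']
  rw [hs, Set.univ_inter]
  simp [Real.volume_Iic]

lemma stdPhi_le_one (x : ℝ) : stdPhi x ≤ 1 := by
  unfold stdPhi
  rw [← integral_stdphi]
  exact setIntegral_le_integral integrable_stdphi (ae_of_all _ fun t => (stdphi_pos t).le)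

lemma stdphi_neg (x : ℝ) : stdphi (-x) = stdphi x := by unfold stdphi; ring_nf

open Set in
lemma stdPhi_zero : stdPhi 0 = 1/2 := by
  have h1 : stdPhi 0 + ∫ x in Ioi (0:ℝ), stdphi x = 1 := by
    rw [← integral_stdphi]
    exact intervalIntegral.integral_Iic_add_Ioi integrable_stdphi.integrableOn
      integrable_stdphi.integrableOn
  have h2 : ∫ x in Ioi (0:ℝ), stdphi x = stdPhi 0 := by
    unfold stdPhi
    rw [show (0:ℝ) = -0 by norm_num, ← integral_comp_neg_Ioi]
    simp [stdphi_neg]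
  rw [h2] at h1
  linarith

open Set in
lemma continuous_stdPhi : Continuous stdPhi := by
  have h : ∀ x, stdPhi x = stdPhi 0 + ∫ t in (0:ℝ)..x, stdphi t := by
    intro x
    have := intervalIntegral.integral_Iic_sub_Iic (integrable_stdphi.integrableOn (s := Iic 0))
      (integrable_stdphi.integrableOn (s := Iic x))
    unfold stdPhi
    rw [← this]; ring
  rw [funext h]
  exact continuous_const.add (integrable_stdphi.continuous_primitive 0)

lemma integrable_comp_affine {g : ℝ → ℝ} (hg : Integrable g) (μ σ : ℝ) (hσ : σ ≠ 0) :
    Integrable (fun z => g ((z - μ) / σ)) :=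
  (hg.comp_div hσ).comp_sub_right μ

lemma integral_comp_affine (g : ℝ → ℝ) (μ σ : ℝ) :
    ∫ z, g ((z - μ) / σ) = |σ| * ∫ u, g u := by
  have h1 : ∫ z, g ((z - μ) / σ) = ∫ z, (fun w => g (w / σ)) (z - μ) := rfl
  rw [h1, integral_sub_right_eq_self (fun w => g (w / σ)) μ, Measure.integral_comp_div]
  simp [smul_eq_mul]

lemma log_stdphi (x : ℝ) :
    Real.log (stdphi x) = -Real.log (Real.sqrt (2 * π)) - x ^ 2 / 2 := by
  unfold stdphi
  rw [Real.log_mul (by positivity) (Real.exp_ne_zero _), Real.log_inv, Real.log_exp]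
  ring

end aux

/-- Value of the entropy integrand integral at `α = 0`: the Gaussian entropy. -/
lemma entropy_integral_at_zero (μ σ : ℝ) (hσ : 0 < σ) :
    ∫ z, ((2 / σ) * stdphi ((z - μ) / σ) * stdPhi (0 * ((z - μ) / σ))) *
        Real.log ((2 / σ) * stdphi ((z - μ) / σ) * stdPhi (0 * ((z - μ) / σ)))
      = -((1 / 2) * Real.log (σ ^ 2) + (1 / 2) * (1 + Real.log (2 * π))) := by
  have hsimp : ∀ z : ℝ, (2 / σ) * stdphi ((z - μ) / σ) * stdPhi (0 * ((z - μ) / σ))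
      = σ⁻¹ * stdphi ((z - μ) / σ) := by
    intro z
    rw [zero_mul, stdPhi_zero]
    ring
  simp_rw [hsimp]
  have hcomp : (fun z => (σ⁻¹ * stdphi ((z - μ) / σ)) * Real.log (σ⁻¹ * stdphi ((z - μ) / σ)))
      = fun z => (fun u => σ⁻¹ * stdphi u * Real.log (σ⁻¹ * stdphi u)) ((z - μ) / σ) := rfl
  rw [hcomp, integral_comp_affine (fun u => σ⁻¹ * stdphi u * Real.log (σ⁻¹ * stdphi u)) μ σ,
    abs_of_pos hσ]
  have hlog : ∀ u : ℝ, Real.log (σ⁻¹ * stdphi u)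
      = -Real.log σ - Real.log (Real.sqrt (2 * π)) - u ^ 2 / 2 := by
    intro u
    rw [Real.log_mul (inv_ne_zero hσ.ne') (stdphi_pos u).ne', Real.log_inv, log_stdphi]
    ring
  have hA : ∫ u : ℝ, σ⁻¹ * stdphi u * Real.log (σ⁻¹ * stdphi u)
      = σ⁻¹ * ((-Real.log σ - Real.log (Real.sqrt (2 * π))) * (∫ u : ℝ, stdphi u)
        + (-(1/2)) * ∫ u : ℝ, u ^ 2 * stdphi u) := by
    rw [← integral_const_mul, ← integral_const_mul,
      ← integral_add ((integrable_stdphi.const_mul _)) ((integrable_sq_stdphi.const_mul _)),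
      ← integral_const_mul]
    congr 1; funext u
    rw [hlog u]; ring
  rw [hA, integral_stdphi, integral_sq_stdphi]
  have hlogsq : Real.log (σ ^ 2) = 2 * Real.log σ := by
    rw [show σ ^ 2 = σ * σ by ring, Real.log_mul hσ.ne' hσ.ne']; ring
  have hlogsqrt : Real.log (Real.sqrt (2 * π)) = Real.log (2 * π) / 2 :=
    Real.log_sqrt (by positivity)
  rw [hlogsq, hlogsqrt]
  field_simp
  ring

/-- As `α → 0`, the entropy of `SN(μ, σ², α)` converges to `H_{N(μ,σ²)}`. -/
theorem entropy_skew_normal_tendsto_zero (μ σ : ℝ) (hσ : 0 < σ) :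
    Tendsto (fun α : ℝ =>
        -∫ z, ((2 / σ) * stdphi ((z - μ) / σ) * stdPhi (α * ((z - μ) / σ))) *
          Real.log ((2 / σ) * stdphi ((z - μ) / σ) * stdPhi (α * ((z - μ) / σ))))
      (nhds 0)
      (nhds ((1 / 2) * Real.log (σ ^ 2) + (1 / 2) * (1 + Real.log (2 * π)))) := by
  set F : ℝ → ℝ → ℝ := fun α z =>
    ((2 / σ) * stdphi ((z - μ) / σ) * stdPhi (α * ((z - μ) / σ))) *
      Real.log ((2 / σ) * stdphi ((z - μ) / σ) * stdPhi (α * ((z - μ) / σ))) with hF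
  have hc : (0:ℝ) < 2 / σ := by positivity
  -- the dominating function
  set bound : ℝ → ℝ := fun z => (2 / σ) * stdphi ((z - μ) / σ) *
    (|Real.log (2 / σ)| + Real.log (Real.sqrt (2 * π)) + ((z - μ) / σ) ^ 2 / 2 + 1) with hbdef
  have hlogsqrt_nonneg : 0 ≤ Real.log (Real.sqrt (2 * π)) := by
    apply Real.log_nonneg
    rw [show (1:ℝ) = Real.sqrt 1 by simp]
    exact Real.sqrt_le_sqrt (by nlinarith [Real.pi_gt_three])
  have hmeas : ∀ α : ℝ, AEStronglyMeasurable (F α) volume := by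
    intro α
    have hcont : Continuous (fun z => (2 / σ) * stdphi ((z - μ) / σ) *
        stdPhi (α * ((z - μ) / σ))) := by
      apply Continuous.mul
      · exact continuous_const.mul (continuous_stdphi.comp (by continuity))
      · exact continuous_stdPhi.comp (by continuity)
    exact (hcont.aestronglyMeasurable).mul
      ((Real.measurable_log.comp hcont.measurable).aestronglyMeasurable)
  have hbound : ∀ α : ℝ, ∀ᵐ z : ℝ, ‖F α z‖ ≤ bound z := by
    intro α
    refine ae_of_all _ fun z => ?_
    set p := stdphi ((z - μ) / σ) with hp
    set q := stdPhi (α * ((z - μ) / σ)) with hq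
    have hp0 : 0 < p := stdphi_pos _
    have hq0 : 0 < q := stdPhi_pos _
    have hq1 : q ≤ 1 := stdPhi_le_one _
    have hlogsplit : Real.log ((2 / σ) * p * q)
        = (Real.log (2 / σ) + Real.log p) + Real.log q := by
      rw [Real.log_mul (by positivity) hq0.ne', Real.log_mul hc.ne' hp0.ne']
    have hlogp : Real.log p = -(Real.log (Real.sqrt (2 * π)) + ((z - μ) / σ) ^ 2 / 2) := by
      rw [hp, log_stdphi]; ring
    have habsp : |Real.log p| = Real.log (Real.sqrt (2 * π)) + ((z - μ) / σ) ^ 2 / 2 := by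
      rw [hlogp, abs_neg, abs_of_nonneg (by positivity)]
    have hqlogq : q * |Real.log q| ≤ 1 := by
      have := Real.abs_log_mul_self_lt q hq0 hq1
      rw [abs_mul, abs_of_pos hq0] at this
      nlinarith [abs_nonneg (Real.log q)]
    have hA : (0:ℝ) < 2 / σ * p * q := by positivity
    have h2 : |Real.log (2 / σ) + Real.log p| ≤ |Real.log (2 / σ)| + |Real.log p| := abs_add_le _ _
    have s1 : q * |Real.log (2 / σ) + Real.log p| ≤ |Real.log (2 / σ)| + |Real.log p| := by
      calc q * |Real.log (2 / σ) + Real.log p|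
          ≤ 1 * (|Real.log (2 / σ)| + |Real.log p|) :=
            mul_le_mul hq1 h2 (abs_nonneg _) one_pos.le
        _ = _ := one_mul _
    have h2σp : (0:ℝ) ≤ 2 / σ * p := by positivity
    have hbz : bound z = 2 / σ * p * (|Real.log (2 / σ)| + |Real.log p| + 1) := by
      simp only [hbdef]
      rw [← hp, habsp]
      ring
    rw [hbz, hF]
    simp only [Real.norm_eq_abs]
    calc |2 / σ * p * q * Real.log (2 / σ * p * q)|
        = (2 / σ * p * q) * |Real.log (2 / σ * p * q)| := by
          rw [abs_mul, abs_of_pos hA]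
      _ ≤ (2 / σ * p * q) * (|Real.log (2 / σ) + Real.log p| + |Real.log q|) := by
          apply mul_le_mul_of_nonneg_left _ hA.le
          rw [hlogsplit]
          exact abs_add_le _ _
      _ = (2 / σ * p) * (q * |Real.log (2 / σ) + Real.log p|)
          + (2 / σ * p) * (q * |Real.log q|) := by ring
      _ ≤ (2 / σ * p) * (|Real.log (2 / σ)| + |Real.log p|) + (2 / σ * p) * 1 :=
          add_le_add (mul_le_mul_of_nonneg_left s1 h2σp)
            (mul_le_mul_of_nonneg_left hqlogq h2σp)
      _ = 2 / σ * p * (|Real.log (2 / σ)| + |Real.log p| + 1) := by ring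
  have hbound_int : Integrable bound := by
    have hint : Integrable (fun u : ℝ => (2 / σ) * stdphi u *
        (|Real.log (2 / σ)| + Real.log (Real.sqrt (2 * π)) + u ^ 2 / 2 + 1)) := by
      have heq : (fun u : ℝ => (2 / σ) * stdphi u *
          (|Real.log (2 / σ)| + Real.log (Real.sqrt (2 * π)) + u ^ 2 / 2 + 1))
          = fun u => ((2 / σ) * (|Real.log (2 / σ)| + Real.log (Real.sqrt (2 * π)) + 1))
              * stdphi u + (1 / σ) * (u ^ 2 * stdphi u) := by
        funext u; ring
      rw [heq]
      exact (integrable_stdphi.const_mul _).add (integrable_sq_stdphi.const_mul _)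
    exact integrable_comp_affine hint μ σ hσ.ne'
  have hlim : ∀ᵐ z : ℝ, Tendsto (fun α => F α z) (nhds 0) (nhds (F 0 z)) := by
    refine ae_of_all _ fun z => ?_
    have hg : Continuous (fun α : ℝ => (2 / σ) * stdphi ((z - μ) / σ) *
        stdPhi (α * ((z - μ) / σ))) := by
      exact continuous_const.mul (continuous_stdPhi.comp (continuous_id.mul continuous_const))
    have hg0 : (2 / σ) * stdphi ((z - μ) / σ) * stdPhi (0 * ((z - μ) / σ)) ≠ 0 := by
      have := stdphi_pos ((z - μ) / σ)
      have := stdPhi_pos (0 * ((z - μ) / σ))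
      positivity
    have hlogc : ContinuousAt (fun α : ℝ => Real.log ((2 / σ) * stdphi ((z - μ) / σ) *
        stdPhi (α * ((z - μ) / σ)))) 0 :=
      ContinuousAt.comp (f := fun α : ℝ => (2 / σ) * stdphi ((z - μ) / σ) *
          stdPhi (α * ((z - μ) / σ))) (g := Real.log) (x := (0:ℝ))
        (Real.continuousAt_log hg0) hg.continuousAt
    exact (hg.continuousAt.mul hlogc).tendsto
  have htendsto : Tendsto (fun α : ℝ => ∫ z, F α z) (nhds 0) (nhds (∫ z, F 0 z)) :=
    tendsto_integral_filter_of_dominated_convergence bound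
      (Eventually.of_forall hmeas) (Eventually.of_forall hbound) hbound_int hlim
  have hval : ∫ z, F 0 z
      = -((1 / 2) * Real.log (σ ^ 2) + (1 / 2) * (1 + Real.log (2 * π))) :=
    entropy_integral_at_zero μ σ hσ
  have := htendsto.neg
  rw [hval, neg_neg] at this
  exact this
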